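/- (Corollary 1, Werner case.) For the shared Werner state ρ_W(p) with 0 ≤ p ≤ 1 and every z, u : ℝ, P₊(Π(z,u)) − P₋(Π(z,u)) = 4·p·sin u·sin z·sin α / (−3 + cos(2α)). In particular, if Bob's measurement is real (u = 0), or p = 0, or sin α = 0, then P₊(Π(z,u)) = P₋(Π(z,u)). -/

import Mathlib

open Matrix Kronecker Complex
open scoped ComplexOrder

noncomputable section

/-- Pauli matrix `σx`. -/
def σx : Matrix (Fin 2) (Fin 2) ℂ := !![0, 1; 1, 0]

/-- Pauli matrix `σy`. -/
def σy : Matrix (Fin 2) (Fin 2) ℂ := !![0, -Complex.I; Complex.I, 0]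

/-- Pauli matrix `σz`. -/
def σz : Matrix (Fin 2) (Fin 2) ℂ := !![1, 0; 0, -1]

/-- The simulated PT-symmetric evolution operator at the chosen time. -/
def Upt (α : ℝ) : Matrix (Fin 2) (Fin 2) ℂ :=
  !![(Real.sin α : ℂ), -Complex.I; -Complex.I, -(Real.sin α : ℂ)]

/-- Alice's operation `A₊` (do nothing). -/
def Apos : Matrix (Fin 2) (Fin 2) ℂ := 1

/-- Alice's operation `A₋` (bit flip `σx`). -/
def Aneg : Matrix (Fin 2) (Fin 2) ℂ := σx

/-- Unnormalized post-selected state after Alice applies `A₊` followed by the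
simulated PT evolution. -/
def postPlus (α : ℝ) (ρ : Matrix (Fin 2 × Fin 2) (Fin 2 × Fin 2) ℂ) :
    Matrix (Fin 2 × Fin 2) (Fin 2 × Fin 2) ℂ :=
  ((Upt α * Apos) ⊗ₖ (1 : Matrix (Fin 2) (Fin 2) ℂ)) * ρ *
    ((Upt α * Apos) ⊗ₖ (1 : Matrix (Fin 2) (Fin 2) ℂ))ᴴ

/-- Unnormalized post-selected state after Alice applies `A₋` followed by the
simulated PT evolution. -/
def postMinus (α : ℝ) (ρ : Matrix (Fin 2 × Fin 2) (Fin 2 × Fin 2) ℂ) :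
    Matrix (Fin 2 × Fin 2) (Fin 2 × Fin 2) ℂ :=
  ((Upt α * Aneg) ⊗ₖ (1 : Matrix (Fin 2) (Fin 2) ℂ)) * ρ *
    ((Upt α * Aneg) ⊗ₖ (1 : Matrix (Fin 2) (Fin 2) ℂ))ᴴ

/-- Probability that Bob obtains outcome `Π` given Alice applied `A₊`. -/
def Pplus (α : ℝ) (ρ : Matrix (Fin 2 × Fin 2) (Fin 2 × Fin 2) ℂ)
    (Pi : Matrix (Fin 2) (Fin 2) ℂ) : ℝ :=
  ((((1 : Matrix (Fin 2) (Fin 2) ℂ) ⊗ₖ Pi) * postPlus α ρ).trace).re /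
    ((postPlus α ρ).trace).re

/-- Probability that Bob obtains outcome `Π` given Alice applied `A₋`. -/
def Pminus (α : ℝ) (ρ : Matrix (Fin 2 × Fin 2) (Fin 2 × Fin 2) ℂ)
    (Pi : Matrix (Fin 2) (Fin 2) ℂ) : ℝ :=
  ((((1 : Matrix (Fin 2) (Fin 2) ℂ) ⊗ₖ Pi) * postMinus α ρ).trace).re /
    ((postMinus α ρ).trace).re

/-- Bob's `σy`-measurement projector onto `|+_y⟩ = (|0⟩ + i|1⟩)/√2`. -/
def Piy : Matrix (Fin 2) (Fin 2) ℂ :=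
  (1/2 : ℂ) • !![1, -Complex.I; Complex.I, 1]

/-- Bob's rank-one projector `Π(z,u)` for an arbitrary projective measurement. -/
def Pizu (z u : ℝ) : Matrix (Fin 2) (Fin 2) ℂ :=
  !![((Real.cos (z/2))^2 : ℂ),
     (Real.cos (z/2) : ℂ) * (Real.sin (z/2) : ℂ) * Complex.exp (-(Complex.I * u));
     (Real.cos (z/2) : ℂ) * (Real.sin (z/2) : ℂ) * Complex.exp (Complex.I * u),
     ((Real.sin (z/2))^2 : ℂ)]

/-- The single-qubit state `|+⟩ = (|0⟩ + |1⟩)/√2`. -/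
def ketPlus : Fin 2 → ℂ := ![((1 / Real.sqrt 2 : ℝ) : ℂ), ((1 / Real.sqrt 2 : ℝ) : ℂ)]

/-- The single-qubit state `|−⟩ = (|0⟩ − |1⟩)/√2`. -/
def ketMinus : Fin 2 → ℂ := ![((1 / Real.sqrt 2 : ℝ) : ℂ), ((-(1 / Real.sqrt 2) : ℝ) : ℂ)]

/-- The (normalized) pure state `|ψ_{β,γ}⟩ = (β|++⟩ + γ|−−⟩)/√(β²+γ²)`. -/
def ψpure (β γ : ℝ) : Fin 2 × Fin 2 → ℂ := fun q =>
  ((β : ℂ) * (ketPlus q.1 * ketPlus q.2) + (γ : ℂ) * (ketMinus q.1 * ketMinus q.2)) /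
    ((Real.sqrt (β^2 + γ^2) : ℝ) : ℂ)

/-- The pure two-qubit density matrix `ρ_{β,γ} = |ψ_{β,γ}⟩⟨ψ_{β,γ}|`. -/
def ρpure (β γ : ℝ) : Matrix (Fin 2 × Fin 2) (Fin 2 × Fin 2) ℂ :=
  Matrix.vecMulVec (ψpure β γ) (fun q => starRingEnd ℂ (ψpure β γ q))

/-- The maximally entangled state `|ψ⁺⟩ = (|00⟩ + |11⟩)/√2`. -/
def ψmax : Fin 2 × Fin 2 → ℂ := fun q =>
  if q.1 = q.2 then ((1 / Real.sqrt 2 : ℝ) : ℂ) else 0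

/-- The two-qubit Werner state `ρ_W(p) = p |ψ⁺⟩⟨ψ⁺| + ((1-p)/4) 1`. -/
def ρWerner (p : ℝ) : Matrix (Fin 2 × Fin 2) (Fin 2 × Fin 2) ℂ :=
  (p : ℂ) • Matrix.vecMulVec ψmax (fun q => starRingEnd ℂ (ψmax q)) +
    (((1 - p) / 4 : ℝ) : ℂ) • 1

/-- The canonical two-qubit state with magnetizations `mx my mz` (Alice),
`nx ny nz` (Bob) and diagonal correlators `Cxx Cyy Czz`. -/
def ρcan (mx my mz nx ny nz Cxx Cyy Czz : ℝ) :
    Matrix (Fin 2 × Fin 2) (Fin 2 × Fin 2) ℂ :=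
  (1/4 : ℂ) • ((1 : Matrix (Fin 2 × Fin 2) (Fin 2 × Fin 2) ℂ)
    + (mx : ℂ) • (σx ⊗ₖ (1 : Matrix (Fin 2) (Fin 2) ℂ))
    + (my : ℂ) • (σy ⊗ₖ (1 : Matrix (Fin 2) (Fin 2) ℂ))
    + (mz : ℂ) • (σz ⊗ₖ (1 : Matrix (Fin 2) (Fin 2) ℂ))
    + (nx : ℂ) • ((1 : Matrix (Fin 2) (Fin 2) ℂ) ⊗ₖ σx)
    + (ny : ℂ) • ((1 : Matrix (Fin 2) (Fin 2) ℂ) ⊗ₖ σy)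
    + (nz : ℂ) • ((1 : Matrix (Fin 2) (Fin 2) ℂ) ⊗ₖ σz)
    + (Cxx : ℂ) • (σx ⊗ₖ σx)
    + (Cyy : ℂ) • (σy ⊗ₖ σy)
    + (Czz : ℂ) • (σz ⊗ₖ σz))

/-- Bob's reduced matrix: the partial trace over Alice's subsystem. -/
def ptraceA (X : Matrix (Fin 2 × Fin 2) (Fin 2 × Fin 2) ℂ) :
    Matrix (Fin 2) (Fin 2) ℂ :=
  Matrix.of fun i j => ∑ k : Fin 2, X (k, i) (k, j)

/-- The trace distance `T(A,B) = (1/2) tr √((A-B)ᴴ (A-B))`, where the square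
root is the positive semidefinite square root. -/
def traceDist (A B : Matrix (Fin 2) (Fin 2) ℂ) : ℝ :=
  (1/2) * ((((Matrix.posSemidef_conjTranspose_mul_self (A - B)).1.eigenvectorUnitary.1 *
    diagonal (((↑) : ℝ → ℂ) ∘ (Real.sqrt ·) ∘ (Matrix.posSemidef_conjTranspose_mul_self (A - B)).1.eigenvalues) *
    (star (Matrix.posSemidef_conjTranspose_mul_self (A - B)).1.eigenvectorUnitary :
      Matrix (Fin 2) (Fin 2) ℂ)).trace).re)

/-! Cycling Alice's operator `A ⊗ 1` through the trace, both probabilities depend on her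
operation only through `M = Aᴴ A`, and `M = (1 + sin² α) 1 ± 2 sin α σy` for `A = U_α A₊`
resp. `U_α A₋`. Against the Werner state,
`tr ((M ⊗ Π) ρ_W) = p/2 Σ M_ij Π_ij + (1-p)/4 tr M tr Π`, so the `σy`-part of `M` only sees
`i (Π₁₀ - Π₀₁) = -sin z sin u`, and the two probabilities are
`1/2 ∓ p sin α sin z sin u / (1 + sin² α)`. -/

theorem trace_one_kronecker_mul_conj_kronecker_one {m m' n R : Type*}
    [Fintype m] [Fintype m'] [Fintype n] [DecidableEq m] [DecidableEq n] [CommRing R] [StarRing R]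
    (A : Matrix m m' R) (B : Matrix n n R) (ρ : Matrix (m' × n) (m' × n) R) :
    (((1 : Matrix m m R) ⊗ₖ B) *
        ((A ⊗ₖ (1 : Matrix n n R)) * ρ * (A ⊗ₖ (1 : Matrix n n R))ᴴ)).trace =
      (((Aᴴ * A) ⊗ₖ B) * ρ).trace := by
  rw [conjTranspose_kronecker, conjTranspose_one, ← Matrix.mul_assoc, ← Matrix.mul_assoc,
    trace_mul_comm, ← Matrix.mul_assoc, ← Matrix.mul_assoc, ← mul_kronecker_mul,
    ← mul_kronecker_mul, Matrix.mul_one, Matrix.one_mul, Matrix.mul_one]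

lemma vecMulVec_ψmax : vecMulVec ψmax (fun q => starRingEnd ℂ (ψmax q)) =
    Matrix.of (fun q r => if q.1 = q.2 ∧ r.1 = r.2 then (1/2 : ℂ) else 0) := by
  ext ⟨i, j⟩ ⟨k, l⟩
  have h : ((Real.sqrt 2 : ℂ))⁻¹ * ((Real.sqrt 2 : ℂ))⁻¹ = 2⁻¹ := by
    rw [← mul_inv, ← Complex.ofReal_mul, Real.mul_self_sqrt zero_le_two, Complex.ofReal_ofNat]
  by_cases hij : i = j <;> by_cases hkl : k = l <;> simp [ψmax, vecMulVec_apply, hij, hkl, h]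

theorem trace_kronecker_mul_ρWerner (M N : Matrix (Fin 2) (Fin 2) ℂ) (p : ℝ) :
    ((M ⊗ₖ N) * ρWerner p).trace =
      p / 2 * ∑ i, ∑ j, M i j * N i j + (1 - p) / 4 * M.trace * N.trace := by
  simp only [trace, ρWerner, vecMulVec_ψmax, one_div, smul_of, coe_smul, ofReal_div, ofReal_sub,
    ofReal_one, ofReal_ofNat, Matrix.mul_add, Algebra.mul_smul_comm, mul_one, diag_apply,
    Matrix.add_apply, Matrix.mul_apply, kroneckerMap_apply, of_apply, Pi.smul_apply, smul_ite,
    real_smul, smul_zero, mul_ite, mul_zero, Fintype.sum_prod_type, Fin.sum_univ_two, true_and,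
    zero_ne_one, false_and, ↓reduceIte, add_zero, one_ne_zero, zero_add, Matrix.smul_apply,
    smul_eq_mul]
  ring

theorem trace_kronecker_mul_ρWerner_of_σy (c d : ℂ) (N : Matrix (Fin 2) (Fin 2) ℂ) (p : ℝ) :
    (((c • 1 + d • σy) ⊗ₖ N) * ρWerner p).trace =
      c / 2 * N.trace + p * d * Complex.I / 2 * (N 1 0 - N 0 1) := by
  rw [trace_kronecker_mul_ρWerner]
  simp only [σy, smul_of, smul_cons, smul_eq_mul, mul_zero, mul_neg, smul_empty, Matrix.add_apply,
    Matrix.smul_apply, of_apply, cons_val', cons_val_fin_one, Fin.sum_univ_two, cons_val_zero,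
    cons_val_one, one_apply_eq, mul_one, add_zero, one_apply_ne, zero_ne_one, one_ne_zero,
    ne_eq, not_false_eq_true, zero_add, neg_mul, trace, diag_apply]
  ring

lemma trace_Pizu (z u : ℝ) : (Pizu z u).trace = 1 := by
  simp only [Pizu, Matrix.trace, Fin.sum_univ_two, Matrix.diag_apply, Matrix.of_apply,
    Matrix.cons_val', Matrix.cons_val_zero, Matrix.cons_val_one,
    Matrix.empty_val', Matrix.cons_val_fin_one]
  exact_mod_cast Real.cos_sq_add_sin_sq (z / 2)

lemma Pizu_one_zero_sub_Pizu_zero_one (z u : ℝ) :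
    Pizu z u 1 0 - Pizu z u 0 1 = Complex.I * Real.sin z * Real.sin u := by
  have hz : Real.sin z = 2 * Real.sin (z / 2) * Real.cos (z / 2) := by
    rw [← Real.sin_two_mul, mul_div_cancel₀ z two_ne_zero]
  simp only [Pizu, Matrix.of_apply, Matrix.cons_val', Matrix.cons_val_zero, Matrix.cons_val_one,
    Matrix.empty_val', Matrix.cons_val_fin_one]
  rw [hz, mul_comm Complex.I, ← neg_mul, Complex.exp_mul_I, Complex.exp_mul_I, Complex.cos_neg,
    Complex.sin_neg, ← Complex.ofReal_cos, ← Complex.ofReal_sin]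
  push_cast
  ring

section Upt

variable (α : ℝ)

lemma conjTranspose_mul_self_Upt_mul_Apos :
    (Upt α * Apos)ᴴ * (Upt α * Apos) =
      ((1 + Real.sin α ^ 2 : ℝ) : ℂ) • 1 + ((2 * Real.sin α : ℝ) : ℂ) • σy := by
  ext i j
  fin_cases i <;> fin_cases j <;>
    simp [Upt, Apos, σy, Matrix.mul_apply, Fin.sum_univ_two, -Complex.ofReal_sin] <;> ring

lemma conjTranspose_mul_self_Upt_mul_Aneg :
    (Upt α * Aneg)ᴴ * (Upt α * Aneg) =
      ((1 + Real.sin α ^ 2 : ℝ) : ℂ) • 1 + ((-(2 * Real.sin α) : ℝ) : ℂ) • σy := by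
  ext i j
  fin_cases i <;> fin_cases j <;>
    simp [Upt, Aneg, σx, σy, Matrix.mul_apply, Fin.sum_univ_two, -Complex.ofReal_sin] <;> ring

end Upt

theorem prob_Pizu_conj_ρWerner (A : Matrix (Fin 2) (Fin 2) ℂ) (c d p z u : ℝ) (hc : c ≠ 0)
    (hA : Aᴴ * A = (c : ℂ) • 1 + (d : ℂ) • σy) :
    ((((1 : Matrix (Fin 2) (Fin 2) ℂ) ⊗ₖ Pizu z u) *
        ((A ⊗ₖ (1 : Matrix (Fin 2) (Fin 2) ℂ)) * ρWerner p *
          (A ⊗ₖ (1 : Matrix (Fin 2) (Fin 2) ℂ))ᴴ)).trace).re /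
      (((A ⊗ₖ (1 : Matrix (Fin 2) (Fin 2) ℂ)) * ρWerner p *
          (A ⊗ₖ (1 : Matrix (Fin 2) (Fin 2) ℂ))ᴴ).trace).re =
      1 / 2 - p * d * Real.sin z * Real.sin u / (2 * c) := by
  have hnum : (((1 : Matrix (Fin 2) (Fin 2) ℂ) ⊗ₖ Pizu z u) *
      ((A ⊗ₖ (1 : Matrix (Fin 2) (Fin 2) ℂ)) * ρWerner p *
        (A ⊗ₖ (1 : Matrix (Fin 2) (Fin 2) ℂ))ᴴ)).trace =
      ((c / 2 - p * d * Real.sin z * Real.sin u / 2 : ℝ) : ℂ) := by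
    rw [trace_one_kronecker_mul_conj_kronecker_one, hA, trace_kronecker_mul_ρWerner_of_σy,
      trace_Pizu, Pizu_one_zero_sub_Pizu_zero_one]
    push_cast
    linear_combination (p : ℂ) * d * Complex.sin z * Complex.sin u / 2 * Complex.I_sq
  have hden : ((A ⊗ₖ (1 : Matrix (Fin 2) (Fin 2) ℂ)) * ρWerner p *
      (A ⊗ₖ (1 : Matrix (Fin 2) (Fin 2) ℂ))ᴴ).trace = c := by
    rw [← Matrix.one_mul (_ * _), ← one_kronecker_one,
      trace_one_kronecker_mul_conj_kronecker_one, hA, trace_kronecker_mul_ρWerner_of_σy]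
    simp [Matrix.trace]
  rw [hnum, hden, Complex.ofReal_re, Complex.ofReal_re]
  field_simp

theorem stmt12_general (α p : ℝ) :
    ∀ z u : ℝ,
      Pplus α (ρWerner p) (Pizu z u) - Pminus α (ρWerner p) (Pizu z u) =
        4 * p * Real.sin u * Real.sin z * Real.sin α / (-3 + Real.cos (2*α)) ∧
      (u = 0 ∨ p = 0 ∨ Real.sin α = 0 →
        Pplus α (ρWerner p) (Pizu z u) = Pminus α (ρWerner p) (Pizu z u)) := by
  intro z u
  have hc : 1 + Real.sin α ^ 2 ≠ 0 := by positivity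
  have hplus := prob_Pizu_conj_ρWerner _ _ _ p z u hc (conjTranspose_mul_self_Upt_mul_Apos α)
  have hminus := prob_Pizu_conj_ρWerner _ _ _ p z u hc (conjTranspose_mul_self_Upt_mul_Aneg α)
  have hdiff : Pplus α (ρWerner p) (Pizu z u) - Pminus α (ρWerner p) (Pizu z u) =
      4 * p * Real.sin u * Real.sin z * Real.sin α / (-3 + Real.cos (2*α)) := by
    have h3 : -3 + Real.cos (2 * α) = -2 * (1 + Real.sin α ^ 2) := by
      rw [Real.cos_two_mul_eq_one_sub]; ring
    rw [Pplus, Pminus, postPlus, postMinus, hplus, hminus, h3]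
    field_simp
    ring
  refine ⟨hdiff, fun h => sub_eq_zero.mp ?_⟩
  rw [hdiff]
  rcases h with rfl | rfl | h <;> simp [*]

/-- Corollary 1, Werner case: for the shared Werner state `ρ_W(p)` and
arbitrary measurement `Π(z,u)` by Bob,
`P₊ − P₋ = 4 p sin u sin z sin α / (−3 + cos 2α)`; in particular if `u = 0`,
or `p = 0`, or `sin α = 0`, then `P₊ = P₋`. -/
theorem stmt12 (α p : ℝ) (hp0 : 0 ≤ p) (hp1 : p ≤ 1) :
    ∀ z u : ℝ,
      Pplus α (ρWerner p) (Pizu z u) - Pminus α (ρWerner p) (Pizu z u) =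
        4 * p * Real.sin u * Real.sin z * Real.sin α / (-3 + Real.cos (2*α)) ∧
      (u = 0 ∨ p = 0 ∨ Real.sin α = 0 →
        Pplus α (ρWerner p) (Pizu z u) = Pminus α (ρWerner p) (Pizu z u)) :=
  stmt12_general α p
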